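/- arXiv:1802.02533 — 5 statements merged into one kernel-verified Lean document; each statement's English description precedes it below -/
import Mathlib

section
/- Let k ≥ 2, let x : ℕ → ℤ be a k-automatic sequence (i.e., its k-kernel is finite), let α be an irrational real number, let ρ ∈ ℝ, and let a : ℕ → ℤ be the Sturmian sequence a(n) = ⌊α(n+1) + ρ⌋ − ⌊αn + ρ⌋ − ⌊α⌋. Then there exists a constant C such that every word which is a factor of both x and a has length at most C. -/
/-!
A finite `k`-kernel contains two equal members `n ↦ x (K n + c)` and `n ↦ x (K n + c + d)` with
`K = kᵉ`, so every factor of `x` agrees with its shift by `d` along a residue class mod `K`.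
The Sturmian sequence is `a p = ⌊{α p + ρ} + {α}⌋`, and `a p ≠ a (p + d)` as soon as `{α p + ρ}`
lies in a suitable arc. Since `Kα` is irrational, its multiples are dense on the circle, and by
compactness every orbit of the rotation by `Kα` enters that arc within a bounded number `N` of
steps. Hence a common factor of `x` and `a` has length less than `K (N + 1) + d`.
-/

/-- The k-kernel of a sequence. -/
def kKernel {A : Type*} (k : ℕ) (x : ℕ → A) : Set (ℕ → A) :=
  {g | ∃ e c : ℕ, c < k ^ e ∧ g = fun n => x (k ^ e * n + c)}

open Set Int

theorem exists_eq_shift_of_kKernel_finite {A : Type*} {k : ℕ} (hk : 1 < k) {x : ℕ → A}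
    (hx : (kKernel k x).Finite) :
    ∃ K c d : ℕ, c < K ∧ 0 < d ∧ ∀ t, x (K * t + c) = x (K * t + c + d) := by
  set e := hx.toFinset.card
  have hmaps : ∀ c ∈ Finset.range (k ^ e), (fun n => x (k ^ e * n + c)) ∈ hx.toFinset :=
    fun c hc => hx.mem_toFinset.2 ⟨e, c, Finset.mem_range.1 hc, rfl⟩
  have hcard : hx.toFinset.card < (Finset.range (k ^ e)).card := by
    rw [Finset.card_range]
    exact Nat.lt_pow_self hk
  obtain ⟨c₁, hc₁, c₂, hc₂, hne, heq⟩ := Finset.exists_ne_map_eq_of_card_lt_of_maps_to hcard hmaps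
  wlog hlt : c₁ < c₂ generalizing c₁ c₂
  · exact this c₂ hc₂ c₁ hc₁ hne.symm heq.symm (by omega)
  refine ⟨k ^ e, c₁, c₂ - c₁, Finset.mem_range.1 hc₁, by omega, fun t => ?_⟩
  rw [add_assoc, Nat.add_sub_cancel' hlt.le]
  exact congrFun heq t

theorem Nat.exists_lt_add_eq_mul_add {K c : ℕ} (hc : c < K) (m : ℕ) :
    ∃ i < K, ∃ q, m + i = K * q + c := by
  have hm := Nat.div_add_mod m K
  have hmod := Nat.mod_lt m (c.zero_le.trans_lt hc)
  rcases le_or_gt (m % K) c with hle | hgt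
  · exact ⟨c - m % K, by omega, m / K, by omega⟩
  · exact ⟨c + K - m % K, by omega, m / K + 1, by rw [Nat.mul_succ]; omega⟩

theorem exists_forall_exists_add_nsmul_mem {G : Type*} [AddGroup G] [TopologicalSpace G]
    [ContinuousAdd G] [CompactSpace G] {a : G} (ha : DenseRange (· • a : ℤ → G)) {U : Set G}
    (hU : IsOpen U) (hne : U.Nonempty) :
    ∃ N : ℕ, ∀ θ : G, ∃ n ≤ N, θ + n • a ∈ U := by
  have hcover : univ ⊆ ⋃ j : ℤ, (· + j • a) ⁻¹' U := by
    intro θ _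
    obtain ⟨u, hu⟩ := hne
    obtain ⟨j, hj⟩ :=
      ha.exists_mem_open (hU.preimage (continuous_const_add θ)) ⟨-θ + u, by simpa using hu⟩
    exact mem_iUnion.2 ⟨j, hj⟩
  obtain ⟨s, hs⟩ := isCompact_univ.elim_finite_subcover _
    (fun j : ℤ => hU.preimage (continuous_add_const (j • a))) hcover
  set M := s.sup Int.natAbs
  refine ⟨2 * M, fun θ => ?_⟩
  -- Translating by `M • a` turns the window `[-M, M]` of integer steps into `[0, 2M]`.
  obtain ⟨j, hjs, hj⟩ := mem_iUnion₂.1 (hs (mem_univ (θ + (M : ℤ) • a)))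
  have hjM : j.natAbs ≤ M := Finset.le_sup (f := Int.natAbs) hjs
  refine ⟨(M + j).toNat, by omega, ?_⟩
  rwa [← natCast_zsmul, Int.toNat_of_nonneg (by omega), add_zsmul, ← add_assoc]

theorem Irrational.exists_forall_exists_fract_mem_Ioo {γ : ℝ} (hγ : Irrational γ) {t₀ t₁ : ℝ}
    (h₀ : 0 ≤ t₀) (h₀₁ : t₀ < t₁) (h₁ : t₁ ≤ 1) :
    ∃ N : ℕ, ∀ θ : ℝ, ∃ n ≤ N, fract (θ + n * γ) ∈ Ioo t₀ t₁ := by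
  have hdense : DenseRange (· • (γ : AddCircle (1 : ℝ)) : ℤ → AddCircle (1 : ℝ)) :=
    AddCircle.denseRange_zsmul_coe_iff.2 (by simpa using hγ)
  obtain ⟨N, hN⟩ := exists_forall_exists_add_nsmul_mem hdense
    (QuotientAddGroup.isOpenMap_coe _ isOpen_Ioo) ((nonempty_Ioo.2 h₀₁).image _)
  refine ⟨N, fun θ => ?_⟩
  obtain ⟨n, hn, z, hz, hzθ⟩ := hN θ
  refine ⟨n, hn, ?_⟩
  have hcoe : (z : AddCircle (1 : ℝ)) = ↑(fract (θ + n * γ)) := by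
    rw [hzθ, AddCircle.coe_fract, AddCircle.coe_add, ← nsmul_eq_mul,
      AddCircle.coe_nsmul]
  have hz' : z ∈ Ico (0 : ℝ) (0 + 1) := ⟨h₀.trans hz.1.le, by linarith [hz.2]⟩
  rwa [← (AddCircle.coe_eq_coe_iff_of_mem_Ico hz' ⟨fract_nonneg _, by simp [fract_lt_one]⟩).1 hcoe]

theorem Irrational.fract_pos {x : ℝ} (hx : Irrational x) : 0 < fract x :=
  Int.fract_pos.2 (hx.ne_int _)

theorem Int.floor_add_sub_floor_sub_floor {R : Type*} [Ring R] [LinearOrder R] [FloorRing R]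
    [IsOrderedRing R] (a b : R) : ⌊a + b⌋ - ⌊a⌋ - ⌊b⌋ = ⌊fract a + fract b⌋ := by
  have : a + b = fract a + fract b + ((⌊a⌋ + ⌊b⌋ : ℤ) : R) := by
    push_cast
    simp only [fract]
    abel
  rw [this, floor_add_intCast]
  ring

noncomputable def sturmian (α ρ : ℝ) (n : ℕ) : ℤ := ⌊α * (n + 1) + ρ⌋ - ⌊α * n + ρ⌋ - ⌊α⌋

theorem sturmian_eq_floor_fract_add_fract (α ρ : ℝ) (n : ℕ) :
    sturmian α ρ n = ⌊fract (α * n + ρ) + fract α⌋ := by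
  rw [sturmian, ← floor_add_sub_floor_sub_floor]
  ring_nf

theorem exists_Ioo_floor_add_ne_floor_fract_add_add {β s : ℝ} (hβ₀ : 0 < β) (hβ₁ : β < 1)
    (hs₀ : 0 < s) (hs₁ : s < 1) :
    ∃ t₀ t₁ : ℝ, 0 ≤ t₀ ∧ t₀ < t₁ ∧ t₁ ≤ 1 ∧
      ∀ t ∈ Ioo t₀ t₁, ⌊t + β⌋ ≠ ⌊fract (t + s) + β⌋ := by
  rcases le_or_gt s β with hsβ | hβs
  · refine ⟨max 0 (1 - β - s), 1 - β, le_max_left _ _, max_lt (by linarith) (by linarith),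
      by linarith, fun t ⟨ht₀, ht₁⟩ => ?_⟩
    rw [max_lt_iff] at ht₀
    have hfract : fract (t + s) = t + s := fract_eq_iff.2 ⟨by linarith, by linarith, 0, by simp⟩
    rw [hfract, floor_eq_zero_iff.2 ⟨by linarith, by linarith⟩,
      (floor_eq_iff.2 ⟨by push_cast; linarith, by push_cast; linarith⟩ : ⌊t + s + β⌋ = 1)]
    norm_num
  · refine ⟨1 - β, min 1 (2 - β - s), by linarith, lt_min (by linarith) (by linarith),
      min_le_left _ _, fun t ⟨ht₀, ht₁⟩ => ?_⟩
    rw [lt_min_iff] at ht₁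
    have hfract : fract (t + s) = t + s - 1 :=
      fract_eq_iff.2 ⟨by linarith, by linarith, 1, by push_cast; ring⟩
    rw [hfract, (floor_eq_zero_iff.2 ⟨by linarith, by linarith⟩ : ⌊t + s - 1 + β⌋ = 0),
      (floor_eq_iff.2 ⟨by push_cast; linarith, by push_cast; linarith⟩ : ⌊t + β⌋ = 1)]
    norm_num

theorem Irrational.exists_forall_exists_sturmian_ne {α : ℝ} (hα : Irrational α) (ρ : ℝ)
    {K d : ℕ} (hK : 0 < K) (hd : 0 < d) :
    ∃ N : ℕ, ∀ s : ℕ, ∃ j ≤ N, sturmian α ρ (s + K * j) ≠ sturmian α ρ (s + K * j + d) := by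
  obtain ⟨t₀, t₁, h₀, h₀₁, h₁, hne⟩ := exists_Ioo_floor_add_ne_floor_fract_add_add hα.fract_pos
    (fract_lt_one α) (hα.mul_natCast hd.ne').fract_pos (fract_lt_one _)
  obtain ⟨N, hN⟩ := (hα.mul_natCast hK.ne').exists_forall_exists_fract_mem_Ioo h₀ h₀₁ h₁
  refine ⟨N, fun s => ?_⟩
  obtain ⟨j, hj, hmem⟩ := hN (α * s + ρ)
  refine ⟨j, hj, ?_⟩
  set p := s + K * j
  have hp : α * s + ρ + j * (α * K) = α * p + ρ := by
    simp only [p]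
    push_cast
    ring
  have hpd : fract (α * ↑(p + d) + ρ) = fract (fract (α * p + ρ) + fract (α * d)) :=
    fract_eq_fract.2 ⟨⌊α * p + ρ⌋ + ⌊α * d⌋, by push_cast; simp only [fract]; ring⟩
  rw [sturmian_eq_floor_fract_add_fract, sturmian_eq_floor_fract_add_fract, hpd]
  exact hne _ (hp ▸ hmem)

theorem automatic_vs_sturmian (k : ℕ) (hk : 2 ≤ k) (x : ℕ → ℤ)
    (hx : (kKernel k x).Finite) (α ρ : ℝ) (hα : Irrational α) (a : ℕ → ℤ)
    (ha : ∀ n : ℕ, a n = ⌊α * (n + 1) + ρ⌋ - ⌊α * n + ρ⌋ - ⌊α⌋) :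
    ∃ C : ℕ, ∀ (L : ℕ) (w : ℕ → ℤ),
      (∃ m : ℕ, ∀ i < L, w i = x (m + i)) →
      (∃ n : ℕ, ∀ i < L, w i = a (n + i)) →
      L ≤ C := by
  obtain ⟨K, c, d, hcK, hd, hxd⟩ := exists_eq_shift_of_kKernel_finite hk hx
  obtain ⟨N, hN⟩ := hα.exists_forall_exists_sturmian_ne ρ (c.zero_le.trans_lt hcK) hd
  have ha' : a = sturmian α ρ := funext ha
  refine ⟨K * (N + 1) + d, fun L w ⟨m, hwx⟩ ⟨n, hwa⟩ => ?_⟩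
  by_contra! hL
  obtain ⟨i, hiK, q, hq⟩ := Nat.exists_lt_add_eq_mul_add hcK m
  obtain ⟨j, hjN, hne⟩ := hN (n + i)
  have hjK : K * j ≤ K * N := Nat.mul_le_mul_left K hjN
  have hlt : i + K * j + d < L := by rw [mul_add_one] at hL; omega
  apply hne
  calc sturmian α ρ (n + i + K * j)
      = w (i + K * j) := by rw [← ha', hwa _ (by omega), add_assoc]
    _ = x (K * (q + j) + c) := by rw [hwx _ (by omega)]; congr 1; rw [mul_add]; omega
    _ = x (K * (q + j) + c + d) := hxd _
    _ = w (i + K * j + d) := by rw [hwx _ hlt]; congr 1; rw [mul_add]; omega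
    _ = sturmian α ρ (n + i + K * j + d) := by rw [← ha', hwa _ hlt]; ring_nf
end

section
/- Let a, a' : ℕ → A be two sequences that coincide outside a set of upper Banach density zero, i.e., {n ∈ ℕ : a(n) ≠ a'(n)} has upper Banach density zero, and let x : ℕ → A be any sequence. Then x and a share arbitrarily long common factors if and only if x and a' share arbitrarily long common factors. -/
/-- A set of natural numbers has upper Banach density zero. -/
def UBDZero (Z : Set ℕ) : Prop :=
  ∀ ε : ℝ, 0 < ε → ∃ l₀ : ℕ, ∀ m l : ℕ, l₀ ≤ l →
    (Nat.card (Z ∩ Set.Ico m (m + l) : Set ℕ) : ℝ) ≤ ε * l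

/-- Two sequences share arbitrarily long common factors. -/
def SharesArbLongFactors {A : Type*} (x y : ℕ → A) : Prop :=
  ∀ L : ℕ, ∃ m n : ℕ, ∀ i < L, x (m + i) = y (n + i)

/-!
A density-zero set `Z` has syndetic gaps of every length `L`: a window of length `k * L` splits
into `k` blocks of length `L`, and once the window holds fewer than `k` points of `Z`, one of
the blocks misses `Z`. So any common factor of `x` and `a` that is long enough contains a stretch
of length `L` on which `a` agrees with `a'`, and that stretch is a common factor of `x` and `a'`.
-/

/-- Pigeonhole: `q ↦ (q - m) / L` sends the points of `Z` in the window to block indices. -/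
lemma exists_disjoint_block_of_ncard_lt {Z : Set ℕ} {m k L : ℕ}
    (h : (Z ∩ Set.Ico m (m + k * L)).ncard < k) :
    ∃ j < k, Disjoint (Set.Ico (m + j * L) (m + j * L + L)) Z := by
  set T := Z ∩ Set.Ico m (m + k * L)
  have hT : T.Finite := (Set.finite_Ico _ _).subset Set.inter_subset_right
  have himage : ((fun q => (q - m) / L) '' T).ncard < (↑(Finset.range k) : Set ℕ).ncard := by
    rw [Set.ncard_coe_finset, Finset.card_range]
    exact (Set.ncard_image_le hT).trans_lt h
  obtain ⟨j, hj, hjT⟩ := Set.exists_mem_notMem_of_ncard_lt_ncard himage (hT.image _)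
  rw [Finset.coe_range, Set.mem_Iio] at hj
  refine ⟨j, hj, Set.disjoint_left.mpr fun i ⟨hi₁, hi₂⟩ hiZ => hjT ⟨i, ⟨hiZ, ?_, ?_⟩, ?_⟩⟩
  · omega
  · nlinarith
  · exact Nat.div_eq_of_lt_le (by omega) (by rw [add_mul, one_mul]; omega)

lemma UBDZero.exists_disjoint_Ico {Z : Set ℕ} (hZ : UBDZero Z) {L : ℕ} (hL : 0 < L) :
    ∃ l, ∀ m, ∃ n, m ≤ n ∧ n + L ≤ m + l ∧ Disjoint (Set.Ico n (n + L)) Z := by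
  obtain ⟨l₀, hl₀⟩ := hZ (1 / (L + 1)) (by positivity)
  set k := l₀ + 1
  refine ⟨k * L, fun m => ?_⟩
  have hcard : (Z ∩ Set.Ico m (m + k * L)).ncard < k := by
    have hbound := hl₀ m (k * L) ((Nat.le_succ l₀).trans (Nat.le_mul_of_pos_right k hL))
    rw [Nat.card_coe_set_eq] at hbound
    have hlt : 1 / ((L : ℝ) + 1) * ((k * L : ℕ) : ℝ) < k := by
      rw [div_mul_eq_mul_div, one_mul, div_lt_iff₀ (by positivity)]
      push_cast
      nlinarith [show (0 : ℝ) < k by positivity]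
    exact_mod_cast hbound.trans_lt hlt
  obtain ⟨j, hj, hdisj⟩ := exists_disjoint_block_of_ncard_lt hcard
  exact ⟨m + j * L, by omega, by nlinarith, hdisj⟩

lemma SharesArbLongFactors.of_ubdZero_ne {A : Type*} {a a' x : ℕ → A}
    (h : UBDZero {n | a n ≠ a' n}) (hx : SharesArbLongFactors x a) :
    SharesArbLongFactors x a' := by
  intro L
  obtain ⟨l, hl⟩ := h.exists_disjoint_Ico (Nat.succ_pos L)
  obtain ⟨m, n, hmn⟩ := hx l
  obtain ⟨n', hnn', hn'l, hdisj⟩ := hl n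
  refine ⟨m + (n' - n), n', fun i hi => ?_⟩
  have hagree : a (n' + i) = a' (n' + i) :=
    not_not.mp (Set.disjoint_left.mp hdisj ⟨by omega, by omega⟩)
  calc x (m + (n' - n) + i) = a (n + (n' - n + i)) := by rw [add_assoc, hmn _ (by omega)]
    _ = a' (n' + i) := by rw [← hagree]; congr 1; omega

theorem shared_factors_invariant {A : Type*} (a a' x : ℕ → A)
    (h : UBDZero {n | a n ≠ a' n}) :
    SharesArbLongFactors x a ↔ SharesArbLongFactors x a' := by
  have h' : UBDZero {n | a' n ≠ a n} := by simpa only [ne_comm] using h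
  exact ⟨SharesArbLongFactors.of_ubdZero_ne h, SharesArbLongFactors.of_ubdZero_ne h'⟩
end

section
/- Let α be an irrational real number, ρ ∈ ℝ, and let a(n) = ⌊α(n+1) + ρ⌋ − ⌊αn + ρ⌋ − ⌊α⌋. Then for no k ≥ 2 is the sequence a k-automatic, i.e., the k-kernel of a is infinite for every k ≥ 2. -/
open Set

section FloorRing

variable {R : Type*} [Field R] [LinearOrder R] [IsStrictOrderedRing R] [FloorRing R]

theorem Int.floor_add_sub_floor_sub_floor_s10 (z w : R) :
    ⌊z + w⌋ - ⌊z⌋ - ⌊w⌋ = if 1 - Int.fract w ≤ Int.fract z then 1 else 0 := by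
  have hsplit : ⌊z + w⌋ = ⌊Int.fract z + Int.fract w⌋ + (⌊z⌋ + ⌊w⌋) := by
    rw [← Int.floor_add_intCast]
    push_cast
    rw [Int.fract, Int.fract]
    ring_nf
  have hz := Int.fract_nonneg z
  have hw := Int.fract_nonneg w
  have hz1 := Int.fract_lt_one z
  have hw1 := Int.fract_lt_one w
  rw [hsplit]
  split_ifs with h
  · have : ⌊Int.fract z + Int.fract w⌋ = 1 := by
      rw [Int.floor_eq_iff]; constructor <;> push_cast <;> linarith
    omega
  · have : ⌊Int.fract z + Int.fract w⌋ = 0 := by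
      rw [Int.floor_eq_iff]; constructor <;> push_cast <;> linarith
    omega

theorem exists_nat_mul_add_int_mem_Ioo {d : R} (hd : d ≠ 0) (ψ : R) {x y : R}
    (hdxy : |d| < y - x) : ∃ (m : ℕ) (i : ℤ), ψ + m * d + i ∈ Ioo x y := by
  wlog hd_pos : 0 < d generalizing ψ d x y
  · obtain ⟨m, i, hlt, hgt⟩ := this (neg_ne_zero.2 hd) (-ψ) (x := -y) (y := -x)
      (by rw [abs_neg]; linarith) (by linarith [lt_of_le_of_ne (not_lt.1 hd_pos) hd])
    exact ⟨m, -i, by push_cast; linarith, by push_cast; linarith⟩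
  rw [abs_of_pos hd_pos] at hdxy
  set b := ψ + ⌊x - ψ⌋
  have hb : b ≤ x := by have := Int.floor_le (x - ψ); simp only [b]; linarith
  refine ⟨⌊(x - b) / d⌋₊ + 1, ⌊x - ψ⌋, ?_, ?_⟩
  · have := Nat.lt_floor_add_one ((x - b) / d)
    rw [div_lt_iff₀ hd_pos] at this
    push_cast
    linarith
  · have := Nat.floor_le (div_nonneg (sub_nonneg.2 hb) hd_pos.le)
    rw [le_div_iff₀ hd_pos] at this
    push_cast
    linarith

end FloorRing

namespace Irrational

variable {θ : ℝ}

theorem exists_nat_mul_sub_int_abs_lt (hθ : Irrational θ) {ε : ℝ} (hε : 0 < ε) :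
    ∃ (k : ℕ) (j : ℤ), k * θ - j ≠ 0 ∧ |k * θ - j| < ε := by
  obtain ⟨N, hN⟩ := exists_nat_one_div_lt hε
  obtain ⟨j, k, hk, -, hkj⟩ := Real.exists_int_int_abs_mul_sub_le θ N.succ_pos
  lift k to ℕ using hk.le
  refine ⟨k, j, sub_ne_zero.2 ((hθ.natCast_mul (by omega)).ne_int j), hkj.trans_lt ?_⟩
  refine lt_of_le_of_lt ?_ hN
  push_cast
  gcongr
  linarith

theorem exists_nat_fract_mul_add_mem_Ioo (hθ : Irrational θ) (ψ : ℝ) {x y : ℝ} (hx : 0 ≤ x)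
    (hxy : x < y) (hy : y ≤ 1) : ∃ n : ℕ, Int.fract (n * θ + ψ) ∈ Ioo x y := by
  obtain ⟨k, j, hd, hdε⟩ := hθ.exists_nat_mul_sub_int_abs_lt (sub_pos.2 hxy)
  obtain ⟨m, i, hmi⟩ := exists_nat_mul_add_int_mem_Ioo hd ψ hdε
  refine ⟨k * m, ?_⟩
  have hfract : Int.fract (((k * m : ℕ) : ℝ) * θ + ψ) = ψ + m * (k * θ - j) + i :=
    Int.fract_eq_iff.2 ⟨by linarith [hmi.1], by linarith [hmi.2], m * j - i, by push_cast; ring⟩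
  rwa [hfract]

theorem exists_nat_xor_le_fract (hθ : Irrational θ) {t : ℝ} (ht0 : 0 < t) (ht1 : t < 1)
    (ψ : ℝ) {δ : ℝ} (hδ : Int.fract δ ≠ 0) :
    ∃ n : ℕ, Xor (t ≤ Int.fract (n * θ + ψ)) (t ≤ Int.fract (n * θ + ψ + δ)) := by
  -- Translating by `δ` moves `t` to `s`; a point on the far side of `t` from `s`, close
  -- enough to `t`, is then separated from its translate by the threshold `t`.
  set s := Int.fract (t + δ)
  have hs0 : 0 ≤ s := Int.fract_nonneg _
  have hs1 : s < 1 := Int.fract_lt_one _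
  have hshift (z : ℝ) (hu : 0 ≤ Int.fract z - t + s) (hu1 : Int.fract z - t + s < 1) :
      Int.fract (z + δ) = Int.fract z - t + s :=
    Int.fract_eq_iff.2 ⟨hu, hu1, ⌊z⌋ + ⌊t + δ⌋, by push_cast; simp only [s, Int.fract]; ring⟩
  have hst : s ≠ t := by
    intro h
    obtain ⟨z, hz⟩ := Int.fract_eq_fract.1 (h.trans (Int.fract_eq_self.2 ⟨ht0.le, ht1⟩).symm)
    exact hδ (Int.fract_eq_zero_iff.2 ⟨z, by linarith⟩)
  rcases hst.lt_or_gt with hst | hst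
  · obtain ⟨n, hu, hu'⟩ := hθ.exists_nat_fract_mul_add_mem_Ioo ψ ht0.le
      (lt_min ht1 (by linarith)) (min_le_left 1 (2 * t - s))
    have := min_le_right 1 (2 * t - s)
    refine ⟨n, Or.inl ⟨hu.le, ?_⟩⟩
    rw [hshift _ (by linarith) (by linarith)]
    linarith
  · obtain ⟨n, hu, hu'⟩ := hθ.exists_nat_fract_mul_add_mem_Ioo ψ (le_max_left 0 (2 * t - s))
      (max_lt ht0 (by linarith)) ht1.le
    have := le_max_right 0 (2 * t - s)
    refine ⟨n, Or.inr ⟨?_, hu'.not_ge⟩⟩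
    rw [hshift _ (by linarith) (by linarith)]
    linarith

end Irrational

theorem kKernel_infinite_of_injOn {A : Type*} {k : ℕ} (hk : 2 ≤ k) {x : ℕ → A}
    (hx : ∀ e, InjOn (fun c n => x (k ^ e * n + c)) (Iio (k ^ e))) :
    (kKernel k x).Infinite := by
  intro hfin
  have hcard (e : ℕ) : k ^ e ≤ (kKernel k x).ncard :=
    calc k ^ e = ((fun c n => x (k ^ e * n + c)) '' Iio (k ^ e)).ncard := by
          rw [(hx e).ncard_image, ncard_Iio_nat]
      _ ≤ (kKernel k x).ncard :=
          ncard_le_ncard (image_subset_iff.2 fun c hc => ⟨e, c, hc, rfl⟩) hfin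
  exact (Nat.lt_pow_self hk).not_ge (hcard _)

theorem sturmian_comp_mul_add_ne {α ρ : ℝ} (hα : Irrational α) {a : ℕ → ℤ}
    (ha : ∀ n : ℕ, a n = ⌊α * (n + 1) + ρ⌋ - ⌊α * n + ρ⌋ - ⌊α⌋) {K c c' : ℕ} (hK : K ≠ 0)
    (hc : c ≠ c') : (fun n => a (K * n + c)) ≠ fun n => a (K * n + c') := by
  have hcode (m : ℕ) : a m = if 1 - Int.fract α ≤ Int.fract (α * m + ρ) then 1 else 0 := by
    rw [ha, ← Int.floor_add_sub_floor_sub_floor_s10]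
    ring_nf
  have hfract_pos : 0 < Int.fract α :=
    (Int.fract_nonneg α).lt_of_ne' (Int.fract_ne_zero_iff.2 fun ⟨z, hz⟩ => hα.ne_int z hz.symm)
  have hδ : Int.fract (((c' - c : ℤ) : ℝ) * α) ≠ 0 :=
    Int.fract_ne_zero_iff.2 fun ⟨z, hz⟩ => (hα.intCast_mul (by omega)).ne_int z hz.symm
  obtain ⟨n, hn⟩ := (hα.natCast_mul hK).exists_nat_xor_le_fract (t := 1 - Int.fract α)
    (by linarith [Int.fract_lt_one α]) (by linarith) (c * α + ρ) hδ
  intro heq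
  have hn_eq := congrFun heq n
  simp only [hcode] at hn_eq
  rw [show α * ((K * n + c : ℕ) : ℝ) + ρ = n * (K * α) + (c * α + ρ) by push_cast; ring,
    show α * ((K * n + c' : ℕ) : ℝ) + ρ = n * (K * α) + (c * α + ρ) + ((c' - c : ℤ) : ℝ) * α by
      push_cast; ring] at hn_eq
  rcases hn with ⟨h, h'⟩ | ⟨h, h'⟩
  · rw [if_pos h, if_neg h'] at hn_eq
    exact one_ne_zero hn_eq
  · rw [if_neg h', if_pos h] at hn_eq
    exact zero_ne_one hn_eq

theorem sturmian_not_automatic (α ρ : ℝ) (hα : Irrational α) (a : ℕ → ℤ)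
    (ha : ∀ n : ℕ, a n = ⌊α * (n + 1) + ρ⌋ - ⌊α * n + ρ⌋ - ⌊α⌋) :
    ∀ k : ℕ, 2 ≤ k → (kKernel k a).Infinite := by
  intro k hk
  refine kKernel_infinite_of_injOn hk fun e c _ c' _ heq => ?_
  by_contra hc
  exact sturmian_comp_mul_add_ne hα ha (pow_ne_zero e (by omega)) hc heq
end

section
/- Let t : ℕ → ℕ be the Thue–Morse sequence, t(n) = s₂(n) mod 2 where s₂(n) is the sum of the binary digits of n. For every l ≥ 1, every factor of t of length at most 2ˡ + 1 occurs in t at some starting position at most 9·2^{l−1}; that is, if w has length L ≤ 2ˡ + 1 and there exists n₀ with t(n₀ + i) = w(i) for all i < L, then there exists n₁ ≤ 9·2^{l−1} with t(n₁ + i) = w(i) for all i < L. -/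
/-!
Writing `n = r + 2 ^ k * q` with `r < 2 ^ k`, the identity `t (r + 2 ^ k * q) = t r + t q (mod 2)`
shows that the `3 * 2 ^ k` values of `t` from `2 ^ k * q` on are determined by the triple
`t q, t (q + 1), t (q + 2)`. A factor of length at most `2 ^ (k + 1) + 1` starting at `n` lies in
that window. The triple is never constant (`t (2 m) ≠ t (2 m + 1)`), and the six non-constant
triples all occur in `0 1 1 0 1 0 0 1` at positions `≤ 5`, so the factor reappears at
`2 ^ k * q' + r ≤ 6 * 2 ^ k` for some `q' ≤ 5`.
-/

/-- The Thue–Morse sequence: sum of binary digits mod 2. -/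
def thueMorse (n : ℕ) : ℕ := (Nat.digits 2 n).sum % 2

theorem thueMorse_lt_two (n : ℕ) : thueMorse n < 2 := Nat.mod_lt _ two_pos

theorem thueMorse_add_two_pow_mul {k j : ℕ} (hj : j < 2 ^ k) (q : ℕ) :
    thueMorse (j + 2 ^ k * q) = (thueMorse j + thueMorse q) % 2 := by
  rcases Nat.eq_zero_or_pos q with rfl | hq
  · simp [thueMorse]
  have hlen := (Nat.digits_length_le_iff one_lt_two j).2 hj
  have hdigits := Nat.digits_append_zeroes_append_digits
    (k := k - (Nat.digits 2 j).length) (n := j) one_lt_two hq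
  rw [Nat.add_sub_cancel' hlen] at hdigits
  simp [thueMorse, ← hdigits, Nat.add_mod]

theorem thueMorse_two_mul_add_one_ne (n : ℕ) : thueMorse (2 * n + 1) ≠ thueMorse (2 * n) := by
  have hodd := thueMorse_add_two_pow_mul (k := 1) (j := 1) one_lt_two n
  have heven := thueMorse_add_two_pow_mul (k := 1) (j := 0) two_pos n
  rw [pow_one, add_comm] at hodd
  rw [pow_one, zero_add] at heven
  have : thueMorse 1 = 1 := by decide
  have : thueMorse 0 = 0 := by decide
  have := thueMorse_lt_two n
  omega

theorem thueMorse_not_cube (q : ℕ) :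
    ¬ (thueMorse q = thueMorse (q + 1) ∧ thueMorse (q + 1) = thueMorse (q + 2)) := by
  rintro ⟨h01, h12⟩
  rcases Nat.even_or_odd' q with ⟨m, rfl | rfl⟩
  · exact thueMorse_two_mul_add_one_ne m h01.symm
  · exact thueMorse_two_mul_add_one_ne (m + 1) (by convert h12.symm using 2 <;> ring)

theorem exists_le_five_thueMorse_triple_eq (q : ℕ) :
    ∃ q' ≤ 5, ∀ a < 3, thueMorse (q' + a) = thueMorse (q + a) := by
  have := thueMorse_lt_two q
  have := thueMorse_lt_two (q + 1)
  have := thueMorse_lt_two (q + 2)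
  have hcube := thueMorse_not_cube q
  have hprefix : (List.range 8).map thueMorse = [0, 1, 1, 0, 1, 0, 0, 1] := by decide
  simp only [List.range_succ, List.range_zero, List.map_cons, List.map_nil,
    List.nil_append, List.cons_append, List.cons.injEq, and_true] at hprefix
  obtain ⟨h0, h1, h2, h3, h4, h5, h6, h7⟩ := hprefix
  have witness (q' : ℕ) (hq' : q' ≤ 5) (ha : thueMorse q' = thueMorse q)
      (hb : thueMorse (q' + 1) = thueMorse (q + 1)) (hc : thueMorse (q' + 2) = thueMorse (q + 2)) :
      ∃ q' ≤ 5, ∀ a < 3, thueMorse (q' + a) = thueMorse (q + a) :=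
    ⟨q', hq', fun a ha' => by interval_cases a <;> assumption⟩
  interval_cases ha : thueMorse q <;> interval_cases hb : thueMorse (q + 1) <;>
    interval_cases hc : thueMorse (q + 2)
  all_goals first
    | exact absurd ⟨rfl, rfl⟩ hcube
    | exact witness 0 (by norm_num) h0 h1 h2
    | exact witness 1 (by norm_num) h1 h2 h3
    | exact witness 2 (by norm_num) h2 h3 h4
    | exact witness 3 (by norm_num) h3 h4 h5
    | exact witness 4 (by norm_num) h4 h5 h6
    | exact witness 5 (by norm_num) h5 h6 h7

theorem thueMorse_two_pow_mul_add_eq {k c q q' : ℕ}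
    (h : ∀ a < c, thueMorse (q' + a) = thueMorse (q + a)) {m : ℕ} (hm : m < c * 2 ^ k) :
    thueMorse (2 ^ k * q' + m) = thueMorse (2 ^ k * q + m) := by
  have hpos : 0 < 2 ^ k := by positivity
  have hsplit (p : ℕ) : 2 ^ k * p + m = m % 2 ^ k + 2 ^ k * (p + m / 2 ^ k) := by
    have := Nat.mod_add_div m (2 ^ k)
    rw [Nat.mul_add]
    omega
  rw [hsplit, hsplit, thueMorse_add_two_pow_mul (Nat.mod_lt _ hpos),
    thueMorse_add_two_pow_mul (Nat.mod_lt _ hpos), h _ (Nat.div_lt_of_lt_mul (by rwa [mul_comm]))]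

theorem thue_morse_factors_appear_early (l : ℕ) (hl : 1 ≤ l)
    (L : ℕ) (hL : L ≤ 2 ^ l + 1) (w : ℕ → ℕ)
    (h : ∃ n₀ : ℕ, ∀ i < L, thueMorse (n₀ + i) = w i) :
    ∃ n₁ : ℕ, n₁ ≤ 9 * 2 ^ (l - 1) ∧ ∀ i < L, thueMorse (n₁ + i) = w i := by
  obtain ⟨n₀, hn₀⟩ := h
  set k := l - 1
  have hlk : 2 ^ l = 2 * 2 ^ k := by rw [← pow_succ']; congr 1; omega
  obtain ⟨q', hq', htriple⟩ := exists_le_five_thueMorse_triple_eq (n₀ / 2 ^ k)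
  have hr : n₀ % 2 ^ k < 2 ^ k := Nat.mod_lt _ (by positivity)
  refine ⟨2 ^ k * q' + n₀ % 2 ^ k, ?_, fun i hi => ?_⟩
  · have : 2 ^ k * q' ≤ 2 ^ k * 5 := Nat.mul_le_mul_left _ hq'
    omega
  · rw [add_assoc, thueMorse_two_pow_mul_add_eq htriple (by omega), ← add_assoc,
      Nat.div_add_mod, hn₀ i hi]
end

section
/- The sequence of pairs ({2√2·n}, {√2·n²}) for n ∈ ℕ is dense in the unit square modulo 1: for all x, y ∈ ℝ and every ε > 0 there exist infinitely many n ∈ ℕ such that the distance from 2√2·n − x to the nearest integer is less than ε and the distance from √2·n² − y to the nearest integer is less than ε. -/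
namespace DensityAux

def pq : ℕ → ℕ × ℕ
  | 0 => (1, 1)
  | k+1 => ((pq k).1 + 2 * (pq k).2, (pq k).1 + (pq k).2)

lemma pq_sq (k : ℕ) : ((pq k).1 : ℤ)^2 - 2 * ((pq k).2 : ℤ)^2 = -(-1)^k := by
  induction k with
  | zero => simp [pq]
  | succ k ih =>
    show (((pq k).1 + 2 * (pq k).2 : ℕ) : ℤ)^2 - 2 * (((pq k).1 + (pq k).2 : ℕ) : ℤ)^2 = -(-1)^(k+1)
    push_cast
    linear_combination -ih

lemma pq_ge (k : ℕ) : k + 1 ≤ (pq k).2 ∧ (pq k).2 ≤ (pq k).1 := by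
  induction k with
  | zero => simp [pq]
  | succ k ih =>
    have : (pq (k+1)).1 = (pq k).1 + 2 * (pq k).2 ∧ (pq (k+1)).2 = (pq k).1 + (pq k).2 := by
      constructor <;> rfl
    omega

lemma s2_sq : Real.sqrt 2 ^ 2 = 2 := Real.sq_sqrt (by norm_num)
lemma s2_gt : (1:ℝ) < Real.sqrt 2 := by
  nlinarith [s2_sq, Real.sqrt_nonneg 2]
lemma s2_lt : Real.sqrt 2 < 1.5 := by
  nlinarith [s2_sq, Real.sqrt_nonneg 2]

lemma pell_bounds (k : ℕ) :
    Real.sqrt 2 * (pq k).2 - (pq k).1 ≠ 0 ∧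
    |Real.sqrt 2 * (pq k).2 - (pq k).1| ≤ 1 / (2 * (pq k).2) ∧
    |(pq k).2 * (Real.sqrt 2 * (pq k).2 - (pq k).1) - (-1:ℝ)^k * (Real.sqrt 2 / 4)| ≤ 1 / ((pq k).2)^2 := by
  obtain ⟨hq1, hpq⟩ := pq_ge k
  set P : ℝ := ((pq k).1 : ℝ) with hP
  set Q : ℝ := ((pq k).2 : ℝ) with hQ
  have hQ1 : (1:ℝ) ≤ Q := by
    rw [hQ]; exact_mod_cast Nat.one_le_iff_ne_zero.mpr (by omega)
  have hPQ : Q ≤ P := by rw [hP, hQ]; exact_mod_cast hpq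
  set δ : ℝ := Real.sqrt 2 * Q - P with hδ
  set S : ℝ := Real.sqrt 2 * Q + P with hS
  set σ : ℝ := (-1:ℝ)^k with hσ
  have hσ' : σ = 1 ∨ σ = -1 := by
    rcases Nat.even_or_odd k with h | h
    · left; rw [hσ]; exact h.neg_one_pow
    · right; rw [hσ]; exact h.neg_one_pow
  have hσabs : |σ| = 1 := by rcases hσ' with h | h <;> rw [h] <;> norm_num
  have hpq_sq : P^2 - 2*Q^2 = -σ := by
    have := pq_sq k
    rw [hP, hQ, hσ]
    exact_mod_cast this
  have hδS : δ * S = σ := by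
    rw [hδ, hS]
    nlinarith [s2_sq]
  have hS2Q : 2 * Q ≤ S := by
    rw [hS]; nlinarith [s2_gt]
  have hSpos : 0 < S := by linarith
  have hδne : δ ≠ 0 := by
    intro h
    rw [h, zero_mul] at hδS
    rcases hσ' with h' | h' <;> rw [h'] at hδS <;> norm_num at hδS
  have habsδS : |δ| * S = 1 := by
    have : |δ * S| = |σ| := by rw [hδS]
    rwa [abs_mul, abs_of_pos hSpos, hσabs] at this
  have s2pos : (0:ℝ) < Real.sqrt 2 := by linarith [s2_gt]
  have hQ2pos : (0:ℝ) < 2 * Q := by linarith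
  have hδb : |δ| ≤ 1 / (2 * Q) := by
    rw [le_div_iff₀ hQ2pos]
    nlinarith [abs_nonneg δ]
  have hδb' : |δ| * (2 * Q) ≤ 1 := by
    nlinarith [abs_nonneg δ]
  refine ⟨hδne, hδb, ?_⟩
  have hδS2 : (Real.sqrt 2 * Q - P) * (Real.sqrt 2 * Q + P) = σ := by
    linear_combination Q^2 * s2_sq - hpq_sq
  set E : ℝ := Q * δ - σ * (Real.sqrt 2 / 4) with hE
  have hEid : E * (4 * S) = σ * (Real.sqrt 2 * δ) := by
    rw [hE, hδ, hS]
    linear_combination 4 * Q * hδS2 + (-2*σ*Q) * s2_sq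
  have habsE : |E| * (4 * S) = Real.sqrt 2 * |δ| := by
    have h1 := congrArg abs hEid
    rw [abs_mul, abs_mul, abs_mul, abs_mul, hσabs,
      abs_of_pos hSpos, abs_of_nonneg (by norm_num : (0:ℝ) ≤ (4:ℝ)),
      abs_of_pos s2pos] at h1
    linarith
  have hQsqpos : (0:ℝ) < Q^2 := by nlinarith
  have key : |E| * (16 * Q^2) ≤ Real.sqrt 2 := by
    calc |E| * (16 * Q^2) = (|E| * (8 * Q)) * (2 * Q) := by ring
      _ ≤ (|E| * (4 * S)) * (2 * Q) :=
          mul_le_mul_of_nonneg_right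
            (mul_le_mul_of_nonneg_left (by linarith : 8 * Q ≤ 4 * S) (abs_nonneg E))
            (by linarith)
      _ = Real.sqrt 2 * (|δ| * (2 * Q)) := by rw [habsE]; ring
      _ ≤ Real.sqrt 2 * 1 := mul_le_mul_of_nonneg_left hδb' (le_of_lt s2pos)
      _ = Real.sqrt 2 := mul_one _
  rw [le_div_iff₀ hQsqpos]
  linarith [key, s2_lt, abs_nonneg E]

lemma rot_pos (γ : ℝ) (hγ : 0 < γ) (t : ℝ) :
    ∃ k : ℕ, ∃ j : ℤ, 0 ≤ k * γ - t - j ∧ k * γ - t - j < γ := by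
  set T : ℝ := t + (⌈-t⌉ : ℤ) with hT
  have hT0 : 0 ≤ T := by
    have := Int.le_ceil (-t)
    rw [hT]; linarith
  refine ⟨⌈T / γ⌉₊, ⌈-t⌉, ?_, ?_⟩
  · have hk1 : T / γ ≤ (⌈T / γ⌉₊ : ℝ) := Nat.le_ceil _
    have := (div_le_iff₀ hγ).mp hk1
    linarith
  · have hk2 : (⌈T / γ⌉₊ : ℝ) < T / γ + 1 := Nat.ceil_lt_add_one (by positivity)
    have h3 : (⌈T / γ⌉₊ : ℝ) * γ < (T / γ + 1) * γ := mul_lt_mul_of_pos_right hk2 hγ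
    have h4 : (T / γ + 1) * γ = T + γ := by field_simp
    rw [h4] at h3
    rw [hT] at h3
    linarith

lemma rot (γ : ℝ) (hγ : γ ≠ 0) (t : ℝ) :
    ∃ k : ℕ, ∃ j : ℤ, |k * γ - t - j| < |γ| := by
  rcases lt_or_gt_of_ne hγ with h | h
  · obtain ⟨k, j, h1, h2⟩ := rot_pos (-γ) (by linarith) (-t)
    refine ⟨k, -j, ?_⟩
    rw [abs_lt, abs_of_neg h]
    push_cast
    constructor <;> linarith
  · obtain ⟨k, j, h1, h2⟩ := rot_pos γ h t
    refine ⟨k, j, ?_⟩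
    rw [abs_lt, abs_of_pos h]
    constructor <;> linarith

lemma dense_of_steps (β : ℝ)
    (h : ∀ ε : ℝ, 0 < ε → ∃ n : ℕ, ∃ j : ℤ, β * n - j ≠ 0 ∧ |β * n - j| < ε) :
    ∀ t ε : ℝ, 0 < ε → ∃ b : ℕ, ∃ j : ℤ, |β * b - t - j| < ε := by
  intro t ε hε
  obtain ⟨n, j, hne, hlt⟩ := h ε hε
  obtain ⟨k, j', hk⟩ := rot (β * n - j) hne t
  refine ⟨k * n, j' + k * j, ?_⟩
  have he : β * ((k * n : ℕ) : ℝ) - t - ((j' + k * j : ℤ) : ℝ)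
      = k * (β * n - j) - t - j' := by push_cast; ring
  rw [he]
  exact lt_trans hk hlt

lemma one_div_Q_lt (ε : ℝ) (hε : 0 < ε) (k : ℕ) (hk : ⌈1/ε⌉₊ ≤ k) :
    1 / ((pq k).2 : ℝ) < ε ∧ (0:ℝ) < ((pq k).2 : ℝ) := by
  obtain ⟨hq1, -⟩ := pq_ge k
  have hQk : (k:ℝ) + 1 ≤ ((pq k).2 : ℝ) := by exact_mod_cast hq1
  have hck : (1/ε : ℝ) ≤ (k : ℝ) := (Nat.le_ceil (1/ε)).trans (by exact_mod_cast hk)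
  have hQpos : (0:ℝ) < ((pq k).2 : ℝ) := by linarith [one_div_pos.mpr hε]
  refine ⟨?_, hQpos⟩
  rw [div_lt_iff₀ hQpos]
  have h1 : 1/ε < ((pq k).2 : ℝ) := by linarith
  rw [div_lt_iff₀ hε] at h1
  linarith

lemma steps_2s2 : ∀ ε : ℝ, 0 < ε →
    ∃ n : ℕ, ∃ j : ℤ, (2 * Real.sqrt 2) * n - j ≠ 0 ∧ |(2 * Real.sqrt 2) * n - j| < ε := by
  intro ε hε
  set k := ⌈1/ε⌉₊ with hk
  obtain ⟨hne, hb, -⟩ := pell_bounds k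
  obtain ⟨h1Q, hQpos⟩ := one_div_Q_lt ε hε k le_rfl
  refine ⟨(pq k).2, 2 * (pq k).1, ?_, ?_⟩
  · have hid : (2 * Real.sqrt 2) * ((pq k).2 : ℝ) - ((2 * ((pq k).1 : ℕ) : ℤ) : ℝ)
        = 2 * (Real.sqrt 2 * ((pq k).2:ℝ) - ((pq k).1:ℝ)) := by push_cast; ring
    rw [hid]
    intro h
    exact hne (by linarith [mul_eq_zero.mp h])
  · have hid : (2 * Real.sqrt 2) * ((pq k).2 : ℝ) - ((2 * ((pq k).1 : ℕ) : ℤ) : ℝ)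
        = 2 * (Real.sqrt 2 * ((pq k).2:ℝ) - ((pq k).1:ℝ)) := by push_cast; ring
    rw [hid, abs_mul, abs_of_nonneg (by norm_num : (0:ℝ) ≤ 2)]
    have h2 : (2:ℝ) * |Real.sqrt 2 * ((pq k).2:ℝ) - ((pq k).1:ℝ)| ≤ 1 / ((pq k).2:ℝ) := by
      rw [le_div_iff₀ hQpos]
      have := (le_div_iff₀ (by linarith : (0:ℝ) < 2 * ((pq k).2:ℝ))).mp hb
      nlinarith [abs_nonneg (Real.sqrt 2 * ((pq k).2:ℝ) - ((pq k).1:ℝ))]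
    linarith

lemma steps_half : ∀ ε : ℝ, 0 < ε →
    ∃ n : ℕ, ∃ j : ℤ, (Real.sqrt 2 / 2) * n - j ≠ 0 ∧ |(Real.sqrt 2 / 2) * n - j| < ε := by
  intro ε hε
  set k := ⌈1/ε⌉₊ with hk
  obtain ⟨hne, hb, -⟩ := pell_bounds k
  obtain ⟨h1Q, hQpos⟩ := one_div_Q_lt ε hε k le_rfl
  have hid : (Real.sqrt 2 / 2) * ((2 * (pq k).2 : ℕ) : ℝ) - (((pq k).1 : ℕ) : ℤ)
      = Real.sqrt 2 * ((pq k).2:ℝ) - ((pq k).1:ℝ) := by push_cast; ring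
  refine ⟨2 * (pq k).2, (pq k).1, ?_, ?_⟩
  · rw [hid]; exact hne
  · rw [hid]
    have : 1 / (2 * ((pq k).2:ℝ)) ≤ 1 / ((pq k).2:ℝ) := by
      apply one_div_le_one_div_of_le hQpos; linarith
    linarith

lemma abs_term_le {a d q c : ℝ} (ha : 0 ≤ a) (h2 : |d| * (2 * q) ≤ 1) (hac : a ≤ c) :
    |2 * a * d| * q ≤ c := by
  rw [abs_mul, abs_of_nonneg (by positivity : (0:ℝ) ≤ 2 * a)]
  nlinarith [abs_nonneg d, mul_le_mul_of_nonneg_left h2 ha]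

lemma abs_term_le' {a X q c : ℝ} (ha : 0 ≤ a) (h1 : |X| * q ≤ 1) (hac : a ≤ c) :
    |a * X| * q ≤ c := by
  rw [abs_mul, abs_of_nonneg ha]
  nlinarith [abs_nonneg X, mul_le_mul_of_nonneg_left h1 ha]

lemma weak_of_sq {X q : ℝ} (h1 : 1 ≤ q) (h2 : |X| * q^2 ≤ 1) : |X| * q ≤ 1 := by
  nlinarith [abs_nonneg X, mul_nonneg (abs_nonneg X) (by linarith : (0:ℝ) ≤ q)]

lemma div_bound {v c q e : ℝ} (hq : 1 ≤ q) (he : 0 < e) (hv : 0 ≤ v)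
    (h1 : v * q ≤ c) (h2 : 16 * c ≤ e * q) : v ≤ e / 16 := by
  have hq0 : 0 < q := by linarith
  have h3 : (16 * v) * q ≤ e * q := by nlinarith
  have h4 : 16 * v ≤ e := le_of_mul_le_mul_right h3 hq0
  linarith

end DensityAux

set_option maxHeartbeats 2000000 in
theorem density_sqrt2_pairs :
    ∀ x y : ℝ, ∀ ε : ℝ, 0 < ε →
      {n : ℕ | (∃ m : ℤ, |2 * Real.sqrt 2 * (n : ℝ) - x - (m : ℝ)| < ε) ∧
               (∃ m : ℤ, |Real.sqrt 2 * (n : ℝ) ^ 2 - y - (m : ℝ)| < ε)}.Infinite := by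
  intro x y ε hε
  apply Set.infinite_of_not_bddAbove
  rw [not_bddAbove_iff]
  intro N
  obtain ⟨b, j₁, hb⟩ := DensityAux.dense_of_steps (2 * Real.sqrt 2) DensityAux.steps_2s2
    x (ε/2) (by linarith)
  obtain ⟨m', j₂, hm'⟩ := DensityAux.dense_of_steps (Real.sqrt 2 / 2) DensityAux.steps_half
    (y - Real.sqrt 2 * (b:ℝ)^2 - Real.sqrt 2 / 4) (ε/2) (by linarith)
  set C : ℕ := (b + m' + 3)^2 with hC
  set D : ℝ := (C : ℝ) + 1 with hD
  have hD0 : 0 < D := by positivity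
  -- choose the first Pell index, even
  set k : ℕ := 2 * (⌈(N:ℝ) + 16 * D / ε⌉₊ + 1) with hk
  set P : ℕ := (DensityAux.pq k).1 with hP
  set Q : ℕ := (DensityAux.pq k).2 with hQ
  have hkQnat : k + 1 ≤ Q := (DensityAux.pq_ge k).1
  have hQ1R : (1:ℝ) ≤ (Q:ℝ) := by exact_mod_cast Nat.one_le_iff_ne_zero.mpr (by omega)
  have hQbig : (N:ℝ) + 16 * D / ε < (Q:ℝ) := by
    have h1 : ((N:ℝ) + 16 * D / ε) ≤ (⌈(N:ℝ) + 16 * D / ε⌉₊ : ℝ) := Nat.le_ceil _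
    have h2 : ((⌈(N:ℝ) + 16 * D / ε⌉₊ : ℕ) : ℝ) + 1 ≤ (Q:ℝ) := by
      have : ⌈(N:ℝ) + 16 * D / ε⌉₊ + 1 ≤ Q := by omega
      exact_mod_cast this
    linarith
  have hQN : (N:ℝ) < (Q:ℝ) := by
    have : 0 < 16 * D / ε := by positivity
    linarith
  have hεQ : 16 * D ≤ ε * (Q:ℝ) := by
    have h1 : 16 * D / ε < (Q:ℝ) := by
      have : (0:ℝ) ≤ N := Nat.cast_nonneg N
      linarith
    rw [div_lt_iff₀ hε] at h1
    nlinarith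
  -- Pell facts at k
  obtain ⟨hδne, hδb, hXb⟩ := DensityAux.pell_bounds k
  rw [← hP, ← hQ] at hδb hXb hδne
  have hkeven : ((-1:ℝ))^k = 1 := (even_two_mul _).neg_one_pow
  rw [hkeven, one_mul] at hXb
  clear_value P Q
  clear hkeven
  set δ : ℝ := Real.sqrt 2 * (Q:ℝ) - (P:ℝ) with hδ
  -- choose the second Pell index, odd
  set k' : ℕ := 2 * ⌈16 * D * (Q:ℝ) / ε⌉₊ + 1 with hk'
  set P' : ℕ := (DensityAux.pq k').1 with hP'
  set Q' : ℕ := (DensityAux.pq k').2 with hQ'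
  have hkQ'nat : k' + 1 ≤ Q' := (DensityAux.pq_ge k').1
  have hQ'1R : (1:ℝ) ≤ (Q':ℝ) := by exact_mod_cast Nat.one_le_iff_ne_zero.mpr (by omega)
  have hQ'big : 16 * D * (Q:ℝ) / ε < (Q':ℝ) := by
    have h1 : (16 * D * (Q:ℝ) / ε) ≤ (⌈16 * D * (Q:ℝ) / ε⌉₊ : ℝ) := Nat.le_ceil _
    have h2 : ((⌈16 * D * (Q:ℝ) / ε⌉₊ : ℕ) : ℝ) + 1 ≤ (Q':ℝ) := by
      have : ⌈16 * D * (Q:ℝ) / ε⌉₊ + 1 ≤ Q' := by omega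
      exact_mod_cast this
    linarith
  have hεQ' : 16 * D * (Q:ℝ) ≤ ε * (Q':ℝ) := by
    rw [div_lt_iff₀ hε] at hQ'big
    nlinarith
  have hεQ'w : 16 * D ≤ ε * (Q':ℝ) := by nlinarith
  obtain ⟨hδ'ne, hδ'b, hX'b⟩ := DensityAux.pell_bounds k'
  rw [← hP', ← hQ'] at hδ'b hX'b hδ'ne
  have hkodd : ((-1:ℝ))^k' = -1 := (odd_two_mul_add_one _).neg_one_pow
  rw [hkodd] at hX'b
  clear_value P' Q'
  set δ' : ℝ := Real.sqrt 2 * (Q':ℝ) - (P':ℝ) with hδ'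
  have hX'b2 : |(Q':ℝ) * δ' + Real.sqrt 2 / 4| ≤ 1 / (Q':ℝ)^2 := by
    have : (Q':ℝ) * δ' - (-1) * (Real.sqrt 2 / 4) = (Q':ℝ) * δ' + Real.sqrt 2 / 4 := by ring
    rwa [this] at hX'b
  -- multiplicative forms of the bounds
  have hQpos : (0:ℝ) < (Q:ℝ) := by linarith
  have hQ'pos : (0:ℝ) < (Q':ℝ) := by linarith
  have hδ2 : |δ| * (2 * (Q:ℝ)) ≤ 1 := by
    have := (le_div_iff₀ (by linarith : (0:ℝ) < 2 * (Q:ℝ))).mp hδb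
    linarith
  have hδ'2 : |δ'| * (2 * (Q':ℝ)) ≤ 1 := by
    have := (le_div_iff₀ (by linarith : (0:ℝ) < 2 * (Q':ℝ))).mp hδ'b
    linarith
  have hX2 : |(Q:ℝ) * δ - Real.sqrt 2 / 4| * (Q:ℝ)^2 ≤ 1 := by
    have := (le_div_iff₀ (by positivity : (0:ℝ) < (Q:ℝ)^2)).mp hXb
    linarith
  have hX'2 : |(Q':ℝ) * δ' + Real.sqrt 2 / 4| * (Q':ℝ)^2 ≤ 1 := by
    have := (le_div_iff₀ (by positivity : (0:ℝ) < (Q':ℝ)^2)).mp hX'b2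
    linarith
  have hX1 : |(Q:ℝ) * δ - Real.sqrt 2 / 4| * (Q:ℝ) ≤ 1 := DensityAux.weak_of_sq hQ1R hX2
  have hX'1 : |(Q':ℝ) * δ' + Real.sqrt 2 / 4| * (Q':ℝ) ≤ 1 := DensityAux.weak_of_sq hQ'1R hX'2
  -- size facts
  have hCcast : (C:ℝ) = ((b:ℝ) + (m':ℝ) + 3)^2 := by rw [hC]; push_cast; ring
  clear_value C
  have hb0 : (0:ℝ) ≤ (b:ℝ) := Nat.cast_nonneg b
  have hm0 : (0:ℝ) ≤ (m':ℝ) := Nat.cast_nonneg m'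
  have hm1D : (m':ℝ) + 1 ≤ D := by rw [hD, hCcast]; nlinarith
  have hm'D : (m':ℝ) ≤ D := by linarith
  have hm2D : ((m':ℝ) + 1)^2 ≤ D := by rw [hD, hCcast]; nlinarith
  have hm'2D : (m':ℝ)^2 ≤ D := by rw [hD, hCcast]; nlinarith
  have hbmD : (b:ℝ) * ((m':ℝ) + 1) ≤ D := by rw [hD, hCcast]; nlinarith
  have hbm'D : (b:ℝ) * (m':ℝ) ≤ D := by rw [hD, hCcast]; nlinarith
  have hmm'D : ((m':ℝ) + 1) * (m':ℝ) ≤ D := by rw [hD, hCcast]; nlinarith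
  clear_value k k' δ δ' D
  clear hδb hδ'b hXb hX'b hX'b2 hX2 hX'2 hδne hδ'ne hkodd hkQnat hkQ'nat
    hQbig hQ'big hCcast hC hD hk hk' hP hQ hP' hQ' hD0
  -- the witness n
  refine ⟨b + (m' + 1) * Q + m' * Q', ⟨?_, ?_⟩, ?_⟩
  · -- first coordinate
    refine ⟨j₁ + 2 * (m' + 1) * (P:ℤ) + 2 * m' * (P':ℤ), ?_⟩
    have hid : 2 * Real.sqrt 2 * ((b + (m' + 1) * Q + m' * Q' : ℕ) : ℝ) - x
        - ((j₁ + 2 * (m' + 1) * (P:ℤ) + 2 * m' * (P':ℤ) : ℤ) : ℝ)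
        = (2 * Real.sqrt 2 * (b:ℝ) - x - (j₁:ℝ))
          + 2 * ((m':ℝ) + 1) * δ + 2 * (m':ℝ) * δ' := by
      rw [hδ, hδ']; push_cast; ring
    rw [hid]
    have ht1 : |2 * ((m':ℝ) + 1) * δ| ≤ ε / 16 :=
      DensityAux.div_bound hQ1R hε (abs_nonneg _)
        (DensityAux.abs_term_le (by positivity) hδ2 hm1D) hεQ
    have ht2 : |2 * (m':ℝ) * δ'| ≤ ε / 16 :=
      DensityAux.div_bound hQ'1R hε (abs_nonneg _)
        (DensityAux.abs_term_le hm0 hδ'2 hm'D) hεQ'w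
    have hA := abs_lt.mp hb
    have h1 := abs_le.mp ht1
    have h2 := abs_le.mp ht2
    rw [abs_lt]
    constructor <;> linarith
  · -- second coordinate
    refine ⟨j₂ + ((m' + 1)^2 * Q * P + m'^2 * Q' * P' + 2 * b * (m' + 1) * P
      + 2 * b * m' * P' + 2 * (m' + 1) * m' * Q * P' : ℕ), ?_⟩
    have hid : Real.sqrt 2 * ((b + (m' + 1) * Q + m' * Q' : ℕ) : ℝ) ^ 2 - y
        - ((j₂ + ((m' + 1)^2 * Q * P + m'^2 * Q' * P' + 2 * b * (m' + 1) * P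
            + 2 * b * m' * P' + 2 * (m' + 1) * m' * Q * P' : ℕ) : ℤ) : ℝ)
        = (Real.sqrt 2 / 2 * (m':ℝ) - (y - Real.sqrt 2 * (b:ℝ)^2 - Real.sqrt 2 / 4) - (j₂:ℝ))
          + ((m':ℝ) + 1)^2 * ((Q:ℝ) * δ - Real.sqrt 2 / 4)
          + (m':ℝ)^2 * ((Q':ℝ) * δ' + Real.sqrt 2 / 4)
          + 2 * ((b:ℝ) * ((m':ℝ) + 1)) * δ
          + 2 * ((b:ℝ) * (m':ℝ)) * δ'
          + 2 * (((m':ℝ) + 1) * (m':ℝ) * (Q:ℝ)) * δ' := by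
      rw [hδ, hδ']; push_cast; ring
    rw [hid]
    have hu1 : |((m':ℝ) + 1)^2 * ((Q:ℝ) * δ - Real.sqrt 2 / 4)| ≤ ε / 16 :=
      DensityAux.div_bound hQ1R hε (abs_nonneg _)
        (DensityAux.abs_term_le' (by positivity) hX1 hm2D) hεQ
    have hu2 : |(m':ℝ)^2 * ((Q':ℝ) * δ' + Real.sqrt 2 / 4)| ≤ ε / 16 :=
      DensityAux.div_bound hQ'1R hε (abs_nonneg _)
        (DensityAux.abs_term_le' (by positivity) hX'1 hm'2D) hεQ'w
    have hu3 : |2 * ((b:ℝ) * ((m':ℝ) + 1)) * δ| ≤ ε / 16 :=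
      DensityAux.div_bound hQ1R hε (abs_nonneg _)
        (DensityAux.abs_term_le (by positivity) hδ2 hbmD) hεQ
    have hu4 : |2 * ((b:ℝ) * (m':ℝ)) * δ'| ≤ ε / 16 :=
      DensityAux.div_bound hQ'1R hε (abs_nonneg _)
        (DensityAux.abs_term_le (by positivity) hδ'2 hbm'D) hεQ'w
    have hu5 : |2 * (((m':ℝ) + 1) * (m':ℝ) * (Q:ℝ)) * δ'| ≤ ε / 16 :=
      DensityAux.div_bound hQ'1R hε (abs_nonneg _)
        (DensityAux.abs_term_le (by positivity) hδ'2
          (mul_le_mul_of_nonneg_right hmm'D (le_of_lt hQpos)))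
        (by linarith [hεQ'])
    have hA := abs_lt.mp hm'
    have h1 := abs_le.mp hu1
    have h2 := abs_le.mp hu2
    have h3 := abs_le.mp hu3
    have h4 := abs_le.mp hu4
    have h5 := abs_le.mp hu5
    rw [abs_lt]
    constructor <;> linarith
  · -- n > N
    have hNQ : N < Q := by exact_mod_cast hQN
    have hQle : Q ≤ (m' + 1) * Q := Nat.le_mul_of_pos_left Q (by omega)
    omega
end
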